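/- Let v_n(m,a) denote the number of Catalan words of length n avoiding the vincular pattern 3-21 whose largest letter is m and whose last letter is a, with v_n(m,a) = 0 unless 1 ≤ a ≤ m ≤ n. Then v_n(1,1) = 1 for all n ≥ 1, v_2(2,1) = 0, v_2(2,2) = 1, and for all n ≥ 3 and 2 ≤ m ≤ n: (i) v_n(m,a) = v_{n−1}(m,a−1) + v_{n−1}(m,a) + v_{n−1}(m,m) for all 1 ≤ a ≤ m−1 (where v_{n−1}(m,0) := 0); and (ii) v_n(m,m) = v_{n−1}(m−1,m−1) + v_{n−1}(m,m−1) + v_{n−1}(m,m). -/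
import Mathlib
set_option maxHeartbeats 1000000


/-- A Catalan word: a word of positive integers starting with 1 in which each
letter exceeds its predecessor by at most 1. -/
def IsCatalanWord {n : ℕ} (w : Fin n → ℕ) : Prop :=
  (∀ i, 1 ≤ w i) ∧ (∀ h : 0 < n, w ⟨0, h⟩ = 1) ∧
  ∀ i : ℕ, ∀ h : i + 1 < n, w ⟨i + 1, h⟩ ≤ w ⟨i, by omega⟩ + 1

/-- `w` contains the vincular pattern 3-21: there are indices `i < j` with
`w i > w j > w (j+1)`. -/
def Contains3_21 {n : ℕ} (w : Fin n → ℕ) : Prop :=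
  ∃ i j : ℕ, ∃ hj : j + 1 < n, ∃ hij : i < j,
    w ⟨j, by omega⟩ < w ⟨i, by omega⟩ ∧ w ⟨j + 1, hj⟩ < w ⟨j, by omega⟩

/-- `v n m a`: the number of Catalan words of length `n` avoiding 3-21 whose
largest letter is `m` and whose last letter is `a` (zero in degenerate cases). -/
noncomputable def v (n m a : ℕ) : ℕ :=
  Set.ncard {w : Fin n → ℕ | IsCatalanWord w ∧ ¬ Contains3_21 w ∧
    (∀ i, w i ≤ m) ∧ (∃ i, w i = m) ∧ ∃ h : 0 < n, w ⟨n - 1, by omega⟩ = a}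

def S (n m a : ℕ) : Set (Fin n → ℕ) :=
  {w : Fin n → ℕ | IsCatalanWord w ∧ ¬ Contains3_21 w ∧
    (∀ i, w i ≤ m) ∧ (∃ i, w i = m) ∧ ∃ h : 0 < n, w ⟨n - 1, by omega⟩ = a}

lemma v_eq (n m a : ℕ) : v n m a = (S n m a).ncard := rfl

lemma S_finite (n m a : ℕ) : (S n m a).Finite := by
  apply Set.Finite.subset (Set.Finite.pi (fun i : Fin n => Set.finite_Iic m))
  intro w hw
  simp only [Set.mem_pi, Set.mem_univ, Set.mem_Iic, forall_true_left]
  exact fun i => hw.2.2.1 i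

def resW {k : ℕ} (w : Fin (k+1) → ℕ) : Fin k → ℕ :=
  fun i => w ⟨i.val, Nat.lt_succ_of_lt i.2⟩

def extW {k : ℕ} (u : Fin k → ℕ) (c : ℕ) : Fin (k+1) → ℕ :=
  fun j => if h : (j : ℕ) < k then u ⟨j, h⟩ else c

lemma extW_lt {k : ℕ} (u : Fin k → ℕ) (c : ℕ) {i : ℕ} (h : i < k) (h2 : i < k+1) :
    extW u c ⟨i, h2⟩ = u ⟨i, h⟩ := dif_pos h

lemma extW_last {k : ℕ} (u : Fin k → ℕ) (c : ℕ) {i : ℕ} (h : ¬ i < k) (h2 : i < k+1) :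
    extW u c ⟨i, h2⟩ = c := dif_neg h

lemma resW_extW {k : ℕ} (u : Fin k → ℕ) (c : ℕ) : resW (extW u c) = u :=
  funext fun i => extW_lt u c i.2 _

lemma fin_congr {n : ℕ} (w : Fin n → ℕ) {i j : ℕ} (hi : i < n) (hj : j < n) (h : i = j) :
    w ⟨i, hi⟩ = w ⟨j, hj⟩ := by subst h; rfl

lemma resW_mem {k m : ℕ} (hk : 0 < k) {w : Fin (k+1) → ℕ}
    (hcat : IsCatalanWord w) (havoid : ¬ Contains3_21 w)
    (hle : ∀ i, resW w i ≤ m) (hmaxpre : ∃ i, resW w i = m) :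
    resW w ∈ S k m (w ⟨k-1, by omega⟩) := by
  refine ⟨⟨fun i => hcat.1 _, fun h => hcat.2.1 (by omega),
      fun i h => hcat.2.2 i (by omega)⟩, ?_, hle, hmaxpre, hk, rfl⟩
  rintro ⟨i, j, hj, hij, h1, h2⟩
  exact havoid ⟨i, j, by omega, hij, h1, h2⟩

lemma extW_mem {k m a b : ℕ} (hk : 0 < k) {u : Fin k → ℕ}
    (hcat : IsCatalanWord u) (havoid : ¬ Contains3_21 u)
    (hle : ∀ i, u i ≤ m) (hmax : (∃ i, u i = m) ∨ a = m)
    (hb : u ⟨k-1, by omega⟩ = b)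
    (hstep : a ≤ b + 1) (ha1 : 1 ≤ a) (ham : a ≤ m)
    (hsafe : b ≤ a ∨ b = m) :
    extW u a ∈ S (k+1) m a := by
  refine ⟨⟨?_, ?_, ?_⟩, ?_, ?_, ?_, by omega, extW_last u a (by omega) _⟩
  · intro i
    unfold extW
    split
    · exact hcat.1 _
    · exact ha1
  · intro h
    rw [extW_lt u a hk]
    exact hcat.2.1 hk
  · intro i h
    rcases Nat.lt_or_ge (i+1) k with h' | h'
    · rw [extW_lt u a h', extW_lt u a (by omega)]
      exact hcat.2.2 i h'
    · have hik : i + 1 = k := by omega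
      rw [extW_last u a (by omega), extW_lt u a (by omega : i < k)]
      have e : u ⟨i, by omega⟩ = u ⟨k-1, by omega⟩ := fin_congr u _ _ (by omega)
      rw [e, hb]
      exact hstep
  · rintro ⟨i, j, hj, hij, h1, h2⟩
    rcases Nat.lt_or_ge (j+1) k with h' | h'
    · rw [extW_lt u a (by omega : j < k), extW_lt u a (by omega : i < k)] at h1
      rw [extW_lt u a h', extW_lt u a (by omega : j < k)] at h2
      exact havoid ⟨i, j, h', hij, h1, h2⟩
    · have hjk : j + 1 = k := by omega
      rw [extW_last u a (by omega), extW_lt u a (by omega : j < k)] at h2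
      rw [extW_lt u a (by omega : j < k), extW_lt u a (by omega : i < k)] at h1
      have e : u ⟨j, by omega⟩ = u ⟨k-1, by omega⟩ := fin_congr u _ _ (by omega)
      rw [e, hb] at h1 h2
      have him := hle ⟨i, by omega⟩
      rcases hsafe with h3 | h3 <;> omega
  · intro i
    unfold extW
    split
    · exact hle _
    · exact ham
  · rcases hmax with ⟨i, hi⟩ | hm
    · exact ⟨⟨i.val, by omega⟩, by rw [extW_lt u a i.2]; exact hi⟩
    · exact ⟨⟨k, by omega⟩, by rw [extW_last u a (by omega)]; exact hm⟩

lemma image_i {k m a : ℕ} (hk : 1 ≤ k) (ha : 1 ≤ a) (ham : a < m) :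
    resW '' S (k+1) m a = S k m (a-1) ∪ (S k m a ∪ S k m m) := by
  ext u
  constructor
  · rintro ⟨w, hw, rfl⟩
    obtain ⟨hcat, havoid, hle, hmaxw, hpos, hlast⟩ := hw
    obtain ⟨p, hp⟩ := hmaxw
    have hwp : w ⟨p.val, p.2⟩ = m := hp
    have hlast' : w ⟨k, by omega⟩ = a := (fin_congr w _ _ (by omega)).trans hlast
    have hpk : p.val ≠ k := by
      intro h
      have : a = m := hlast'.symm.trans ((fin_congr w _ _ h.symm).trans hwp)
      omega
    have hble : w ⟨k-1, by omega⟩ ≤ m := hle ⟨k-1, by omega⟩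
    have hbge : a ≤ w ⟨k-1, by omega⟩ + 1 :=
      calc a = w ⟨k, by omega⟩ := hlast'.symm
        _ = w ⟨k-1+1, by omega⟩ := fin_congr w _ _ (by omega)
        _ ≤ w ⟨k-1, by omega⟩ + 1 := hcat.2.2 (k-1) (by omega)
    have hbm : w ⟨k-1, by omega⟩ = a - 1 ∨ w ⟨k-1, by omega⟩ = a ∨ w ⟨k-1, by omega⟩ = m := by
      by_contra hcon
      push_neg at hcon
      have hpk1 : p.val ≠ k - 1 := by
        intro h
        exact hcon.2.2 ((fin_congr w _ _ h.symm).trans hwp)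
      apply havoid
      refine ⟨p.val, k-1, by omega, by omega, ?_, ?_⟩
      · calc w ⟨k-1, by omega⟩ < m := lt_of_le_of_ne hble hcon.2.2
          _ = w ⟨p.val, by omega⟩ := hwp.symm
      · calc w ⟨k-1+1, by omega⟩ = a := (fin_congr w _ _ (by omega)).trans hlast'
          _ < w ⟨k-1, by omega⟩ := by omega
    have hpre : ∀ i : Fin k, resW w i ≤ m := fun i => hle ⟨i.val, by omega⟩
    have hppre : p.val < k := by omega
    rcases hbm with hb | hb | hb
    · left
      have h2 := resW_mem hk hcat havoid hpre ⟨⟨p.val, hppre⟩, hwp⟩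
      rw [hb] at h2
      exact h2
    · right; left
      have h2 := resW_mem hk hcat havoid hpre ⟨⟨p.val, hppre⟩, hwp⟩
      rw [hb] at h2
      exact h2
    · right; right
      have h2 := resW_mem hk hcat havoid hpre ⟨⟨k-1, by omega⟩, hb⟩
      rw [hb] at h2
      exact h2
  · rintro (hu | hu | hu) <;>
      obtain ⟨hcat, havoid, hle, hmax, hk', hlast⟩ := hu <;>
      refine ⟨extW u a, ?_, resW_extW u a⟩
    · exact extW_mem hk hcat havoid hle (Or.inl hmax) hlast (by omega) ha (by omega)
        (Or.inl (by omega))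
    · exact extW_mem hk hcat havoid hle (Or.inl hmax) hlast (by omega) ha (by omega)
        (Or.inl le_rfl)
    · exact extW_mem hk hcat havoid hle (Or.inl hmax) hlast (by omega) ha (by omega)
        (Or.inr rfl)

lemma image_ii {k m : ℕ} (hk : 1 ≤ k) (hm : 2 ≤ m) :
    resW '' S (k+1) m m = S k (m-1) (m-1) ∪ (S k m (m-1) ∪ S k m m) := by
  ext u
  constructor
  · rintro ⟨w, hw, rfl⟩
    obtain ⟨hcat, havoid, hle, hmaxw, hpos, hlast⟩ := hw
    have hlast' : w ⟨k, by omega⟩ = m := (fin_congr w _ _ (by omega)).trans hlast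
    have hble : w ⟨k-1, by omega⟩ ≤ m := hle ⟨k-1, by omega⟩
    have hbge : m ≤ w ⟨k-1, by omega⟩ + 1 :=
      calc m = w ⟨k, by omega⟩ := hlast'.symm
        _ = w ⟨k-1+1, by omega⟩ := fin_congr w _ _ (by omega)
        _ ≤ w ⟨k-1, by omega⟩ + 1 := hcat.2.2 (k-1) (by omega)
    have hpre : ∀ i : Fin k, resW w i ≤ m := fun i => hle ⟨i.val, by omega⟩
    rcases Nat.eq_or_lt_of_le hble with hb | hb
    · right; right
      have h2 := resW_mem hk hcat havoid hpre ⟨⟨k-1, by omega⟩, hb⟩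
      rw [hb] at h2
      exact h2
    · have hb1 : w ⟨k-1, by omega⟩ = m - 1 := by omega
      by_cases hx : ∃ i, resW w i = m
      · right; left
        have h2 := resW_mem hk hcat havoid hpre hx
        rw [hb1] at h2
        exact h2
      · left
        push_neg at hx
        have hpre' : ∀ i : Fin k, resW w i ≤ m - 1 := by
          intro i
          have h3 := hpre i
          have h4 := hx i
          omega
        have h2 := resW_mem hk hcat havoid hpre' ⟨⟨k-1, by omega⟩, hb1⟩
        rw [hb1] at h2
        exact h2
  · rintro (hu | hu | hu) <;>
      obtain ⟨hcat, havoid, hle, hmax, hk', hlast⟩ := hu <;>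
      refine ⟨extW u m, ?_, resW_extW u m⟩
    · refine extW_mem hk hcat havoid (fun i => by have := hle i; omega) (Or.inr rfl)
        hlast (by omega) (by omega) le_rfl (Or.inl (by omega))
    · exact extW_mem hk hcat havoid hle (Or.inl hmax) hlast (by omega) (by omega) le_rfl
        (Or.inl (by omega))
    · exact extW_mem hk hcat havoid hle (Or.inl hmax) hlast (by omega) (by omega) le_rfl
        (Or.inr rfl)

lemma resW_injOn {k m a : ℕ} : Set.InjOn resW (S (k+1) m a) := by
  rintro w ⟨_, _, _, _, _, hl⟩ w' ⟨_, _, _, _, _, hl'⟩ h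
  funext j
  rcases Nat.lt_or_ge j.val k with hj | hj
  · exact congrFun h ⟨j.val, hj⟩
  · have hjv : j.val = k := by have := j.2; omega
    have e1 : w j = a := (fin_congr w j.2 (by omega) (by omega)).trans hl
    have e2 : w' j = a := (fin_congr w' j.2 (by omega) (by omega)).trans hl'
    exact e1.trans e2.symm

lemma S_disj_last {k m m' a a' : ℕ} (h : a ≠ a') : Disjoint (S k m a) (S k m' a') := by
  rw [Set.disjoint_left]
  rintro w ⟨_, _, _, _, hp, hl⟩ ⟨_, _, _, _, _, hl'⟩
  exact h (hl.symm.trans hl')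

lemma S_disj_max {k m a a' : ℕ} (hm : 1 ≤ m) : Disjoint (S k (m-1) a) (S k m a') := by
  rw [Set.disjoint_left]
  rintro w ⟨_, _, hle, _, _, _⟩ ⟨_, _, _, ⟨i, hi⟩, _, _⟩
  have := hle i
  omega

lemma ncard_three {α : Type*} (A B C : Set α) (hAB : Disjoint A B) (hAC : Disjoint A C)
    (hBC : Disjoint B C) (fA : A.Finite) (fB : B.Finite) (fC : C.Finite) :
    (A ∪ (B ∪ C)).ncard = A.ncard + B.ncard + C.ncard := by
  rw [Set.ncard_union_eq (Disjoint.union_right hAB hAC) fA (fB.union fC),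
    Set.ncard_union_eq hBC fB fC]
  omega

lemma count_i {k m a : ℕ} (hk : 1 ≤ k) (ha : 1 ≤ a) (ham : a < m) :
    v (k+1) m a = v k m (a-1) + v k m a + v k m m := by
  rw [v_eq, v_eq, v_eq, v_eq, ← Set.ncard_image_of_injOn resW_injOn, image_i hk ha ham]
  exact ncard_three _ _ _ (S_disj_last (by omega)) (S_disj_last (by omega))
    (S_disj_last (by omega)) (S_finite _ _ _) (S_finite _ _ _) (S_finite _ _ _)

lemma count_ii {k m : ℕ} (hk : 1 ≤ k) (hm : 2 ≤ m) :
    v (k+1) m m = v k (m-1) (m-1) + v k m (m-1) + v k m m := by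
  rw [v_eq, v_eq, v_eq, v_eq, ← Set.ncard_image_of_injOn resW_injOn, image_ii hk hm]
  exact ncard_three _ _ _ (S_disj_max (by omega)) (S_disj_max (by omega))
    (S_disj_last (by omega)) (S_finite _ _ _) (S_finite _ _ _) (S_finite _ _ _)

lemma v_one (n : ℕ) (hn : 1 ≤ n) : v n 1 1 = 1 := by
  rw [v_eq]
  have hS : S n 1 1 = {fun _ => 1} := by
    ext w
    constructor
    · rintro ⟨hcat, _, hle, _, _, _⟩
      funext i
      exact le_antisymm (hle i) (hcat.1 i)
    · rintro rfl
      refine ⟨⟨fun _ => le_rfl, fun _ => rfl, fun _ _ => Nat.le_succ 1⟩, ?_, fun _ => le_rfl,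
        ⟨⟨0, hn⟩, rfl⟩, hn, rfl⟩
      rintro ⟨i, j, hj, hij, h1, h2⟩
      exact absurd h1 (lt_irrefl 1)
  rw [hS, Set.ncard_singleton]

lemma v_221 : v 2 2 1 = 0 := by
  rw [v_eq]
  have hS : S 2 2 1 = ∅ := by
    ext w
    simp only [Set.mem_empty_iff_false, iff_false]
    rintro ⟨hcat, _, hle, ⟨p, hp⟩, _, hlast⟩
    have h0 : w ⟨0, by omega⟩ = 1 := hcat.2.1 (by omega)
    have h1 : w ⟨1, by omega⟩ = 1 := hlast
    rcases p with ⟨pv, hpv⟩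
    interval_cases pv
    · exact absurd (h0.symm.trans hp) (by omega)
    · exact absurd (h1.symm.trans hp) (by omega)
  rw [hS, Set.ncard_empty]

def g2 : Fin 2 → ℕ := fun i => if (i : ℕ) = 0 then 1 else 2

lemma v_222 : v 2 2 2 = 1 := by
  rw [v_eq]
  have hS : S 2 2 2 = {g2} := by
    ext w
    rw [Set.mem_singleton_iff]
    constructor
    · rintro ⟨hcat, _, hle, _, _, hlast⟩
      have h0 : w ⟨0, by omega⟩ = 1 := hcat.2.1 (by omega)
      have h1 : w ⟨1, by omega⟩ = 2 := hlast
      funext i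
      rcases i with ⟨iv, hiv⟩
      interval_cases iv
      · simpa [g2] using h0
      · simpa [g2] using h1
    · rintro rfl
      refine ⟨⟨?_, ?_, ?_⟩, ?_, ?_, ⟨⟨1, by omega⟩, by norm_num [g2]⟩, by omega,
        by norm_num [g2]⟩
      · intro i
        simp only [g2]
        split <;> omega
      · intro h; norm_num [g2]
      · intro i h
        have hi0 : i = 0 := by omega
        subst hi0
        norm_num [g2]
      · rintro ⟨i, j, hj, hij, h1, h2⟩
        omega
      · intro i
        simp only [g2]
        split <;> omega
  rw [hS, Set.ncard_singleton]

theorem catalan_3_21_recurrence :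
    (∀ n : ℕ, 1 ≤ n → v n 1 1 = 1) ∧
    v 2 2 1 = 0 ∧ v 2 2 2 = 1 ∧
    ∀ n m : ℕ, 3 ≤ n → 2 ≤ m → m ≤ n →
      (∀ a : ℕ, 1 ≤ a → a ≤ m - 1 →
          v n m a = v (n - 1) m (a - 1) + v (n - 1) m a + v (n - 1) m m) ∧
      v n m m = v (n - 1) (m - 1) (m - 1) + v (n - 1) m (m - 1) + v (n - 1) m m := by
  refine ⟨v_one, v_221, v_222, ?_⟩
  intro n m hn hm hmn
  obtain ⟨k, rfl⟩ : ∃ k, n = k + 1 := ⟨n - 1, by omega⟩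
  have hk : 1 ≤ k := by omega
  simp only [Nat.add_sub_cancel]
  exact ⟨fun a ha ham => count_i hk ha (by omega), count_ii hk hm⟩
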